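/- Let (G,P,Δ) be a Garside structure of finite type. Suppose X = A₁·A₂·…·A_r is a product of simple elements in left normal form, let t₀ be a simple element, and suppose that A_j is an atom for some j < r. Then the final factor of the left normal form of t₀X equals A_r, i.e. φ(t₀X) = A_r. -/

import Mathlib

/-- A Garside structure `(G, P, Δ)` on a group `G`: `P` is the submonoid of positive
elements, `Δ` the Garside element.  The axioms (G1)-(G4) are stated below:
the prefix relation `a ≼ b ⟺ a⁻¹b ∈ P` is a lattice order (with gcd `wedge` and
lcm `vee`), the simple elements `[1,Δ]` generate `G`, conjugation by `Δ` preserves `P`,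
and every nontrivial positive element has finite letter length. -/
structure GarsideStructure (G : Type*) [Group G] where
  P : Set G
  one_mem : (1 : G) ∈ P
  mul_mem : ∀ {a b : G}, a ∈ P → b ∈ P → a * b ∈ P
  inter_inv : ∀ a : G, a ∈ P → a⁻¹ ∈ P → a = 1
  Δ : G
  Δ_mem : Δ ∈ P
  wedge : G → G → G
  vee : G → G → G
  wedge_le_left : ∀ a b : G, (wedge a b)⁻¹ * a ∈ P
  wedge_le_right : ∀ a b : G, (wedge a b)⁻¹ * b ∈ P
  le_wedge : ∀ a b c : G, c⁻¹ * a ∈ P → c⁻¹ * b ∈ P → c⁻¹ * wedge a b ∈ P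
  le_vee_left : ∀ a b : G, a⁻¹ * vee a b ∈ P
  le_vee_right : ∀ a b : G, b⁻¹ * vee a b ∈ P
  vee_le : ∀ a b c : G, a⁻¹ * c ∈ P → b⁻¹ * c ∈ P → (vee a b)⁻¹ * c ∈ P
  simples_generate : Subgroup.closure {a : G | a ∈ P ∧ a⁻¹ * Δ ∈ P} = ⊤
  conj_mem : ∀ a : G, a ∈ P → Δ⁻¹ * a * Δ ∈ P
  len_bdd : ∀ X : G, X ∈ P → X ≠ 1 →
    BddAbove {k : ℕ | ∃ w : List G, w.length = k ∧ (∀ a ∈ w, a ∈ P ∧ a ≠ 1) ∧ w.prod = X}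

namespace GarsideStructure

variable {G : Type*} [Group G] (S : GarsideStructure G)

/-- The prefix order `a ≼ b`. -/
def le (a b : G) : Prop := a⁻¹ * b ∈ S.P

/-- Strict prefix order `a ≺ b`. -/
def lt (a b : G) : Prop := S.le a b ∧ a ≠ b

/-- The suffix relation `a ≽ b ⟺ ab⁻¹ ∈ P`. -/
def ges (a b : G) : Prop := a * b⁻¹ ∈ S.P

/-- Simple elements: the interval `[1, Δ]`. -/
def IsSimple (a : G) : Prop := a ∈ S.P ∧ S.le a S.Δ

/-- Atoms: elements of `P \ {1}` that are not products of two elements of `P \ {1}`. -/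
def IsAtom' (a : G) : Prop := a ∈ S.P ∧ a ≠ 1 ∧
  ¬ ∃ b c : G, b ∈ S.P ∧ b ≠ 1 ∧ c ∈ S.P ∧ c ≠ 1 ∧ a = b * c

/-- The letter length `‖X‖` of a positive element. -/
noncomputable def norm (X : G) : ℕ :=
  sSup {k : ℕ | ∃ w : List G, w.length = k ∧ (∀ a ∈ w, a ∈ S.P ∧ a ≠ 1) ∧ w.prod = X}

/-- Finite type: finitely many simple elements. -/
def FiniteType : Prop := {a : G | S.IsSimple a}.Finite

/-- Homogeneous: the letter length is additive on `P`. -/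
def Homogeneous : Prop := ∀ X ∈ S.P, ∀ Y ∈ S.P, S.norm (X * Y) = S.norm X + S.norm Y

/-- Symmetric: for simple `u, v`, `u ≼ v ⟺ v ≽ u`. -/
def IsSymmetric : Prop := ∀ u v : G, S.IsSimple u → S.IsSimple v → (S.le u v ↔ S.ges v u)

/-- Square free: no simple element contains the square of an atom. -/
def SquareFree : Prop := ∀ a : G, S.IsSimple a →
  ¬ ∃ U x V : G, U ∈ S.P ∧ S.IsAtom' x ∧ V ∈ S.P ∧ a = U * x ^ 2 * V

/-- The right complement `∂A = A⁻¹Δ`. -/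
def dl (A : G) : G := A⁻¹ * S.Δ

/-- `τ(X) = Δ⁻¹XΔ`. -/
def tau (X : G) : G := S.Δ⁻¹ * X * S.Δ

/-- The product `A·B` of simple elements is left weighted if `A = (AB) ∧ Δ`. -/
def LeftWeighted (A B : G) : Prop := A = S.wedge (A * B) S.Δ

/-- The gcd for the suffix order `≽` (derived from the lcm for `≼`). -/
def rwedge (a b : G) : G := (S.vee a⁻¹ b⁻¹)⁻¹

/-- The product `A·B` of simple elements is right weighted if `B = (AB) ∧̃ Δ`. -/
def RightWeighted (A B : G) : Prop := B = S.rwedge (A * B) S.Δ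

end GarsideStructure
/-- A Garside structure together with the (unique) left normal form of each element:
`X = Δ^(nfInf X) · (nfWord X)`, where the factors of `nfWord X` are simple elements
different from `1` and `Δ` and each consecutive pair is left weighted. -/
structure GarsideStructureNF (G : Type*) [Group G] extends GarsideStructure G where
  nfInf : G → ℤ
  nfWord : G → List G
  nf_factors : ∀ X : G, ∀ a ∈ nfWord X,
    toGarsideStructure.IsSimple a ∧ a ≠ 1 ∧ a ≠ Δ
  nf_chain : ∀ X : G, List.Chain' toGarsideStructure.LeftWeighted (nfWord X)
  nf_prod : ∀ X : G, X = Δ ^ nfInf X * (nfWord X).prod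
  nf_unique : ∀ (X : G) (p : ℤ) (w : List G),
    (∀ a ∈ w, toGarsideStructure.IsSimple a ∧ a ≠ 1 ∧ a ≠ Δ) →
    List.Chain' toGarsideStructure.LeftWeighted w →
    X = Δ ^ p * w.prod → p = nfInf X ∧ w = nfWord X

namespace GarsideStructureNF

variable {G : Type*} [Group G] (S : GarsideStructureNF G)

/-- The infimum `inf X` of `X`: the power of `Δ` in the left normal form. -/
def inf (X : G) : ℤ := S.nfInf X

/-- The canonical length `ℓ(X)`. -/
def ell (X : G) : ℕ := (S.nfWord X).length

/-- The initial factor `ι(X) = τ^{-p}(A₁)`. -/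
def iota (X : G) : G := S.Δ ^ S.nfInf X * (S.nfWord X).headD 1 * S.Δ ^ (-S.nfInf X)

/-- The final factor `φ(X) = A_r`. -/
def phi (X : G) : G := (S.nfWord X).getLastD 1

/-- The preferred prefix `𝔭(X) = ι(X) ∧ ∂(φ(X))`. -/
def pp (X : G) : G := S.wedge (S.iota X) ((S.phi X)⁻¹ * S.Δ)

/-- Cyclic sliding `𝔰(X) = 𝔭(X)⁻¹ X 𝔭(X)` (and `𝔰(X) = X` when `ℓ(X) = 0`). -/
def sliding (X : G) : G := if S.ell X = 0 then X else (S.pp X)⁻¹ * X * S.pp X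

/-- Cycling `c(X) = ι(X)⁻¹ X ι(X)` (and `c(X) = X` when `ℓ(X) = 0`). -/
def cycling (X : G) : G := if S.ell X = 0 then X else (S.iota X)⁻¹ * X * S.iota X

/-- Decycling `d(X) = φ(X) X φ(X)⁻¹` (and `d(X) = X` when `ℓ(X) = 0`). -/
def decycling (X : G) : G := if S.ell X = 0 then X else S.phi X * X * (S.phi X)⁻¹

/-- The set of sliding circuits `SC(X) = {Y ∈ X^G | 𝔰^m(Y) = Y for some m > 0}`. -/
def SC (X : G) : Set G := {Y : G | IsConj X Y ∧ ∃ m : ℕ, 0 < m ∧ S.sliding^[m] Y = Y}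

/-- `s` is an SC-minimal conjugator for `X`. -/
def SCMinConj (X s : G) : Prop :=
  s ∈ S.P ∧ s ≠ 1 ∧ s⁻¹ * X * s ∈ S.SC X ∧
  ∀ t : G, S.lt 1 t → S.lt t s → t⁻¹ * X * t ∉ S.SC X

/-- The summit infimum `inf_s X = max {inf Y | Y ∈ X^G}`. -/
noncomputable def infS (X : G) : ℤ := sSup {p : ℤ | ∃ Y : G, IsConj X Y ∧ p = S.nfInf Y}

/-- The summit length `ℓ_s(X) = min {ℓ(Y) | Y ∈ X^G}`. -/
noncomputable def ellS (X : G) : ℕ := sInf {r : ℕ | ∃ Y : G, IsConj X Y ∧ r = S.ell Y}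

end GarsideStructureNF
/-!
The normal form of `t₀ X` is obtained by transport: write `t_{i-1} A_i = B_i t_i` with
`B_i = t_{i-1} A_i ∧ Δ`. All `t_i` are simple, and the domino rule makes `B₁ ⋯ B_r t_r` left
weighted, so after deleting its leading factors `Δ` and a trailing `1` it is the left normal
form of `t₀ X`. At the atom `A_j` the factorisation `A_j = (t_{j-1}⁻¹ B_j) t_j` into positive
elements forces `t_j = 1` or `t_j = A_j`. In the first case the later factors pass through
unchanged; in the second, pushing `A_j` through the left-weighted word `A_{j+1} ⋯ A_r` merely
shifts it, so `t_r = A_r`. Either way the last factor is `A_r`.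
-/

namespace GarsideStructure

variable {G : Type*} [Group G] (S : GarsideStructure G)

theorem le_refl (a : G) : S.le a a := by simp [le, S.one_mem]

theorem le_trans {a b c : G} (hab : S.le a b) (hbc : S.le b c) : S.le a c := by
  simpa [le, mul_assoc] using S.mul_mem hab hbc

theorem le_antisymm {a b : G} (hab : S.le a b) (hba : S.le b a) : a = b :=
  inv_mul_eq_one.1 (S.inter_inv _ hab (by simpa [le] using hba))

theorem mul_le_mul_left_iff (c a b : G) : S.le (c * a) (c * b) ↔ S.le a b := by
  simp [le, mul_assoc]

theorem eq_one_of_le_one {a : G} (ha : a ∈ S.P) (h : S.le a 1) : a = 1 :=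
  S.le_antisymm h (by simpa [le] using ha)

theorem wedge_eq_left {a b : G} (h : S.le a b) : S.wedge a b = a :=
  S.le_antisymm (S.wedge_le_left a b) (S.le_wedge a b a (S.le_refl a) h)

theorem mul_wedge (c a b : G) : c * S.wedge a b = S.wedge (c * a) (c * b) := by
  apply S.le_antisymm
  · exact S.le_wedge _ _ _ ((S.mul_le_mul_left_iff c _ _).2 (S.wedge_le_left a b))
      ((S.mul_le_mul_left_iff c _ _).2 (S.wedge_le_right a b))
  · have h := S.le_wedge a b (c⁻¹ * S.wedge (c * a) (c * b))
      (by simpa [mul_assoc] using S.wedge_le_left (c * a) (c * b))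
      (by simpa [mul_assoc] using S.wedge_le_right (c * a) (c * b))
    simpa [le, mul_assoc] using h

theorem wedge_wedge_of_le {a b c : G} (h : S.le b c) :
    S.wedge (S.wedge a c) b = S.wedge a b :=
  S.le_antisymm
    (S.le_wedge _ _ _ (S.le_trans (S.wedge_le_left _ b) (S.wedge_le_left a c))
      (S.wedge_le_right _ b))
    (S.le_wedge _ _ _ (S.le_wedge _ _ _ (S.wedge_le_left a b)
      (S.le_trans (S.wedge_le_right a b) h)) (S.wedge_le_right a b))

theorem Delta_le_mul_Delta {a : G} (ha : a ∈ S.P) : S.le S.Δ (a * S.Δ) := by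
  simpa [le, mul_assoc] using S.conj_mem a ha

theorem isSimple_wedge_Delta {X : G} (hX : X ∈ S.P) : S.IsSimple (S.wedge X S.Δ) :=
  ⟨by simpa using S.le_wedge X S.Δ 1 (by simpa using hX) (by simpa using S.Δ_mem),
    S.wedge_le_right X S.Δ⟩

theorem eq_Delta_of_leftWeighted {A : G} (hA : A ∈ S.P) (h : S.LeftWeighted A S.Δ) :
    A = S.Δ := by
  have hle : S.le (S.wedge (A * S.Δ) S.Δ) S.Δ := S.wedge_le_right _ _
  have hge : S.le S.Δ (S.wedge (A * S.Δ) S.Δ) :=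
    S.le_wedge _ _ _ (S.Delta_le_mul_Delta hA) (S.le_refl _)
  rw [← h] at hle hge
  exact S.le_antisymm hle hge

theorem ne_Delta_of_isChain {a : G} {l : List G} (hl : ∀ b ∈ a :: l, b ∈ S.P)
    (hch : (a :: l).IsChain S.LeftWeighted) (ha : a ≠ S.Δ) : ∀ b ∈ l, b ≠ S.Δ := by
  have hch' : (a :: l).IsChain (fun x y => x ∈ S.P ∧ S.LeftWeighted x y) :=
    hch.imp_of_mem_imp fun x _ hx _ hxy => ⟨hl x hx, hxy⟩
  refine hch'.cons_induction (· ≠ S.Δ) l ?_ ha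
  rintro x y ⟨hx, hxy⟩ hxΔ rfl
  exact hxΔ (S.eq_Delta_of_leftWeighted hx hxy)

def carry (t A : G) : G := (S.wedge (t * A) S.Δ)⁻¹ * (t * A)

theorem wedge_mul_carry (t A : G) : S.wedge (t * A) S.Δ * S.carry t A = t * A :=
  mul_inv_cancel_left _ _

theorem carry_mem (t A : G) : S.carry t A ∈ S.P := S.wedge_le_left _ _

theorem le_wedge_mul_Delta {t A : G} (ht : S.IsSimple t) (hA : A ∈ S.P) :
    S.le t (S.wedge (t * A) S.Δ) :=
  S.le_wedge _ _ _ (by simpa [le] using hA) ht.2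

theorem isSimple_carry {t A : G} (ht : S.IsSimple t) (hA : S.IsSimple A) :
    S.IsSimple (S.carry t A) := by
  refine ⟨S.carry_mem t A, show (S.carry t A)⁻¹ * S.Δ ∈ S.P from ?_⟩
  -- `(carry t A)⁻¹ Δ = (A⁻¹ Δ) · τ(t⁻¹ (tA ∧ Δ))`
  have h := S.mul_mem hA.2 (S.conj_mem _ (S.le_wedge_mul_Delta ht hA.1))
  convert h using 1
  simp only [carry]
  group

theorem wedge_mul_Delta_ne_one {t A : G} (ht : S.IsSimple t) (hA : S.IsSimple A)
    (hA1 : A ≠ 1) : S.wedge (t * A) S.Δ ≠ 1 := by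
  intro h
  have ht1 : t = 1 := S.eq_one_of_le_one ht.1 (h ▸ S.le_wedge_mul_Delta ht hA.1)
  rw [ht1, one_mul, S.wedge_eq_left hA.2] at h
  exact hA1 h

theorem leftWeighted_wedge_carry (t A : G) :
    S.LeftWeighted (S.wedge (t * A) S.Δ) (S.carry t A) := by
  rw [LeftWeighted, S.wedge_mul_carry]

-- `tAA' ∧ Δ = t (AA' ∧ t⁻¹Δ) = t ((AA' ∧ Δ) ∧ t⁻¹Δ) = t (A ∧ t⁻¹Δ) = tA ∧ Δ`
theorem wedge_mul_of_leftWeighted {t A A' : G} (ht : S.IsSimple t)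
    (h : S.LeftWeighted A A') : S.wedge (t * A * A') S.Δ = S.wedge (t * A) S.Δ := by
  have htΔ : S.le (t⁻¹ * S.Δ) S.Δ := by simpa [le, mul_assoc] using S.conj_mem t ht.1
  have hΔ : S.Δ = t * (t⁻¹ * S.Δ) := (mul_inv_cancel_left t S.Δ).symm
  rw [hΔ, mul_assoc, ← S.mul_wedge, ← S.wedge_wedge_of_le htΔ, ← h, S.mul_wedge]

theorem leftWeighted_wedge_wedge {t A A' : G} (ht : S.IsSimple t) (hA' : A' ∈ S.P)
    (h : S.LeftWeighted A A') :
    S.LeftWeighted (S.wedge (t * A) S.Δ) (S.wedge (S.carry t A * A') S.Δ) := by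
  have hB' : S.wedge (S.carry t A * A') S.Δ ∈ S.P :=
    (S.isSimple_wedge_Delta (S.mul_mem (S.carry_mem t A) hA')).1
  have hle : S.le (S.wedge (t * A) S.Δ * S.wedge (S.carry t A * A') S.Δ) (t * A * A') := by
    have hfac : t * A * A' = S.wedge (t * A) S.Δ * (S.carry t A * A') := by
      rw [← mul_assoc, S.wedge_mul_carry]
    rw [hfac, S.mul_le_mul_left_iff]
    exact S.wedge_le_left _ _
  apply S.le_antisymm
  · exact S.le_wedge _ _ _ (by simpa [le] using hB') (S.wedge_le_right _ _)
  · have h' : S.le (S.wedge (S.wedge (t * A) S.Δ * S.wedge (S.carry t A * A') S.Δ) S.Δ)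
        (S.wedge (t * A * A') S.Δ) :=
      S.le_wedge _ _ _ (S.le_trans (S.wedge_le_left _ _) hle) (S.wedge_le_right _ _)
    rwa [S.wedge_mul_of_leftWeighted ht h] at h'

theorem carry_eq_one_or_eq_of_isAtom {t A : G} (ht : S.IsSimple t) (hA : S.IsAtom' A) :
    S.carry t A = 1 ∨ S.carry t A = A := by
  have hA_eq : A = (t⁻¹ * S.wedge (t * A) S.Δ) * S.carry t A := by
    rw [mul_assoc, S.wedge_mul_carry, inv_mul_cancel_left]
  by_contra! hne
  refine hA.2.2 ⟨_, _, S.le_wedge_mul_Delta ht hA.1, fun h1 => ?_, S.carry_mem t A, hne.1, hA_eq⟩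
  rw [h1, one_mul] at hA_eq
  exact hne.2 hA_eq.symm

theorem carry_of_leftWeighted {A A' : G} (h : S.LeftWeighted A A') : S.carry A A' = A' := by
  rw [carry, ← h, inv_mul_cancel_left]

theorem carry_one {A : G} (hA : S.IsSimple A) : S.carry 1 A = 1 := by
  rw [carry, one_mul, S.wedge_eq_left hA.2, inv_mul_cancel]

-- `pushWord t [A₁, …, A_r] = [B₁, …, B_r]` and `pushRem t [A₁, …, A_r] = t_r`, where `t₀ = t`.
def pushWord (S : GarsideStructure G) : G → List G → List G
  | _, [] => []
  | t, A :: v => S.wedge (t * A) S.Δ :: pushWord S (S.carry t A) v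

def pushRem (S : GarsideStructure G) : G → List G → G
  | t, [] => t
  | t, A :: v => pushRem S (S.carry t A) v

theorem pushWord_prod_mul_pushRem (t : G) (v : List G) :
    (S.pushWord t v).prod * S.pushRem t v = t * v.prod := by
  induction v generalizing t with
  | nil => simp [pushWord, pushRem]
  | cons A v ih =>
    rw [pushWord, pushRem, List.prod_cons, mul_assoc, ih, ← mul_assoc, S.wedge_mul_carry,
      List.prod_cons, mul_assoc]

theorem isSimple_pushRem {t : G} {v : List G} (ht : S.IsSimple t)
    (hv : ∀ a ∈ v, S.IsSimple a) : S.IsSimple (S.pushRem t v) := by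
  induction v generalizing t with
  | nil => exact ht
  | cons A v ih =>
    exact ih (S.isSimple_carry ht (hv A List.mem_cons_self))
      fun a ha => hv a (List.mem_cons_of_mem _ ha)

theorem pushWord_mem {t : G} {v : List G} (ht : S.IsSimple t)
    (hv : ∀ a ∈ v, S.IsSimple a ∧ a ≠ 1) : ∀ b ∈ S.pushWord t v, S.IsSimple b ∧ b ≠ 1 := by
  induction v generalizing t with
  | nil => simp [pushWord]
  | cons A v ih =>
    obtain ⟨hA, hA1⟩ := hv A List.mem_cons_self
    rintro b (_ | ⟨_, hb⟩)
    · exact ⟨S.isSimple_wedge_Delta (S.mul_mem ht.1 hA.1), S.wedge_mul_Delta_ne_one ht hA hA1⟩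
    · exact ih (S.isSimple_carry ht hA) (fun a ha => hv a (List.mem_cons_of_mem _ ha)) b hb

theorem isChain_pushWord_append_pushRem {t : G} {v : List G} (ht : S.IsSimple t)
    (hv : ∀ a ∈ v, S.IsSimple a) (hch : v.IsChain S.LeftWeighted) :
    (S.pushWord t v ++ [S.pushRem t v]).IsChain S.LeftWeighted := by
  induction v generalizing t with
  | nil => exact List.isChain_singleton _
  | cons A v ih =>
    have htail := ih (S.isSimple_carry ht (hv A List.mem_cons_self))
      (fun a ha => hv a (List.mem_cons_of_mem _ ha)) hch.tail
    cases v with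
    | nil => exact List.isChain_pair.2 (S.leftWeighted_wedge_carry t A)
    | cons A' v =>
      simp only [pushWord, pushRem, List.cons_append] at htail ⊢
      exact List.isChain_cons_cons.2 ⟨S.leftWeighted_wedge_wedge ht
        (hv A' (by simp)).1 (List.isChain_cons_cons.1 hch).1, htail⟩

theorem pushWord_one {v : List G} (hv : ∀ a ∈ v, S.IsSimple a) : S.pushWord 1 v = v := by
  induction v with
  | nil => rfl
  | cons A v ih =>
    have hA := hv A List.mem_cons_self
    rw [pushWord, S.carry_one hA, one_mul, S.wedge_eq_left hA.2,
      ih fun a ha => hv a (List.mem_cons_of_mem _ ha)]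

theorem pushRem_one {v : List G} (hv : ∀ a ∈ v, S.IsSimple a) : S.pushRem 1 v = 1 := by
  induction v with
  | nil => rfl
  | cons A v ih =>
    rw [pushRem, S.carry_one (hv A List.mem_cons_self),
      ih fun a ha => hv a (List.mem_cons_of_mem _ ha)]

theorem pushRem_of_isChain {A : G} {v : List G} (hch : (A :: v).IsChain S.LeftWeighted) :
    S.pushRem A v = v.getLastD A := by
  induction v generalizing A with
  | nil => rfl
  | cons A' v ih =>
    rw [pushRem, S.carry_of_leftWeighted (List.isChain_cons_cons.1 hch).1, ih hch.tail,
      List.getLastD_cons]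

theorem pushWord_append (t : G) (u v : List G) :
    S.pushWord t (u ++ v) = S.pushWord t u ++ S.pushWord (S.pushRem t u) v := by
  induction u generalizing t with
  | nil => rfl
  | cons A u ih => simp only [List.cons_append, pushWord, pushRem, ih]

theorem pushRem_append (t : G) (u v : List G) :
    S.pushRem t (u ++ v) = S.pushRem (S.pushRem t u) v := by
  induction u generalizing t with
  | nil => rfl
  | cons A u ih => exact ih _

theorem pushRem_eq_one_or_getLastD {t₀ : G} {w : List G} {j : ℕ} (ht₀ : S.IsSimple t₀)
    (hw : ∀ a ∈ w, S.IsSimple a) (hch : w.IsChain S.LeftWeighted) (hj : j + 1 < w.length)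
    (hatom : S.IsAtom' (w.getD j 1)) :
    (S.pushRem t₀ w = 1 ∧ (S.pushWord t₀ w).getLastD 1 = w.getLastD 1) ∨
      S.pushRem t₀ w = w.getLastD 1 := by
  obtain ⟨u, v, hsplit, hv_ne⟩ : ∃ u v, w = u ++ w.getD j 1 :: v ∧ v ≠ [] :=
    ⟨w.take j, w.drop (j + 1), by rw [List.getD_eq_getElem _ _ (by omega),
      ← List.drop_eq_getElem_cons, List.take_append_drop], by simp; omega⟩
  generalize w.getD j 1 = A at hsplit hatom
  subst hsplit
  have hu : ∀ a ∈ u, S.IsSimple a := fun a ha => hw a (by simp [ha])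
  have hv : ∀ a ∈ v, S.IsSimple a := fun a ha => hw a (by simp [ha])
  simp only [pushWord_append, pushRem_append, pushWord, pushRem]
  rcases S.carry_eq_one_or_eq_of_isAtom (S.isSimple_pushRem ht₀ hu) hatom with hc | hc
  · refine .inl ⟨by rw [hc, S.pushRem_one hv], ?_⟩
    obtain ⟨v₀, v, rfl⟩ := List.exists_cons_of_ne_nil hv_ne
    rw [hc, S.pushWord_one hv]
    simp [List.getLast?_cons]
  · refine .inr ?_
    rw [hc, S.pushRem_of_isChain (hch.suffix (List.suffix_append _ _))]
    simp [List.getLast?_cons]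

end GarsideStructure

namespace GarsideStructureNF

variable {G : Type*} [Group G] (S : GarsideStructureNF G)

theorem nfWord_Delta_mul (X : G) : S.nfWord (S.Δ * X) = S.nfWord X :=
  (S.nf_unique (S.Δ * X) (1 + S.nfInf X) (S.nfWord X) (S.nf_factors X) (S.nf_chain X)
    (by rw [zpow_one_add, mul_assoc, ← S.nf_prod X])).2.symm

theorem nfWord_prod {l : List G} (hl : ∀ a ∈ l, S.IsSimple a ∧ a ≠ 1 ∧ a ≠ S.Δ)
    (hch : l.IsChain S.LeftWeighted) : S.nfWord l.prod = l :=
  (S.nf_unique l.prod 0 l hl hch (by simp)).2.symm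

theorem phi_prod_of_isChain {l : List G} (hl : ∀ a ∈ l, S.IsSimple a ∧ a ≠ 1)
    (hch : l.IsChain S.LeftWeighted) (hlast : l.getLastD 1 ≠ S.Δ) :
    S.phi l.prod = l.getLastD 1 := by
  induction l with
  | nil => rw [phi, S.nfWord_prod (by simp) List.isChain_nil]
  | cons a l ih =>
    by_cases ha : a = S.Δ
    · have hl_ne : l ≠ [] := by
        rintro rfl
        exact hlast ha
      have hlast_eq : (a :: l).getLastD 1 = l.getLastD 1 := by
        obtain ⟨b, l, rfl⟩ := List.exists_cons_of_ne_nil hl_ne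
        simp [List.getLast?_cons]
      rw [hlast_eq] at hlast ⊢
      rw [List.prod_cons, ha, phi, S.nfWord_Delta_mul]
      exact ih (fun b hb => hl b (List.mem_cons_of_mem _ hb)) hch.tail hlast
    · have hne : ∀ b ∈ a :: l, b ≠ S.Δ := by
        rintro b (_ | ⟨_, hb⟩)
        · exact ha
        · exact S.ne_Delta_of_isChain (fun b hb => (hl b hb).1.1) hch ha b hb
      rw [phi, S.nfWord_prod (fun b hb => ⟨(hl b hb).1, (hl b hb).2, hne b hb⟩) hch]

end GarsideStructureNF

theorem statement6_general {G : Type*} [Group G] (S : GarsideStructureNF G)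
    (w : List G) (hw : ∀ a ∈ w, S.IsSimple a ∧ a ≠ 1 ∧ a ≠ S.Δ)
    (hchain : List.Chain' S.LeftWeighted w)
    (t₀ : G) (ht₀ : S.IsSimple t₀)
    (j : ℕ) (hj : j + 1 < w.length) (hatom : S.IsAtom' (w.getD j 1)) :
    S.phi (t₀ * w.prod) = w.getLastD 1 := by
  have hws : ∀ a ∈ w, S.IsSimple a := fun a ha => (hw a ha).1
  have hlast : w.getLastD 1 ≠ 1 ∧ w.getLastD 1 ≠ S.Δ := by
    obtain ⟨b, w', rfl⟩ :=
      List.exists_cons_of_ne_nil (List.ne_nil_of_length_pos (by omega : 0 < w.length))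
    rw [List.getLastD_cons]
    exact (hw _ List.getLastD_mem_cons).2
  have hword := S.pushWord_mem ht₀ fun a ha => ⟨(hw a ha).1, (hw a ha).2.1⟩
  have hchain' := S.isChain_pushWord_append_pushRem ht₀ hws hchain
  rw [← S.pushWord_prod_mul_pushRem]
  rcases S.pushRem_eq_one_or_getLastD ht₀ hws hchain hj hatom with ⟨hrem, hword_last⟩ | hrem
  · rw [hrem, mul_one, ← hword_last]
    exact S.phi_prod_of_isChain hword (hchain'.prefix (List.prefix_append _ _))
      (hword_last ▸ hlast.2)
  · have h := S.phi_prod_of_isChain (l := S.pushWord t₀ w ++ [S.pushRem t₀ w])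
      (fun a ha => by
        rcases List.mem_append.1 ha with ha | ha
        · exact hword a ha
        · rw [List.mem_singleton.1 ha]
          exact ⟨S.isSimple_pushRem ht₀ hws, hrem ▸ hlast.1⟩)
      hchain' (by rw [List.getLastD_concat, hrem]; exact hlast.2)
    rw [← hrem]
    rwa [List.prod_append, List.prod_singleton, List.getLastD_concat] at h

/-- **Corollary 2.7** (Orevkov): if `X = A₁ ⋯ A_r` is in left normal form, `t₀` is a
simple element, and `A_j` is an atom for some `j < r`, then `φ(t₀X) = A_r`. -/
theorem statement6 {G : Type*} [Group G] (S : GarsideStructureNF G) (hft : S.FiniteType)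
    (w : List G) (hw : ∀ a ∈ w, S.IsSimple a ∧ a ≠ 1 ∧ a ≠ S.Δ)
    (hchain : List.Chain' S.LeftWeighted w)
    (t₀ : G) (ht₀ : S.IsSimple t₀)
    (j : ℕ) (hj : j + 1 < w.length) (hatom : S.IsAtom' (w.getD j 1)) :
    S.phi (t₀ * w.prod) = w.getLastD 1 :=
  statement6_general S w hw hchain t₀ ht₀ j hj hatom
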